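/- Let γ = 1 − 1/√2. For every complex number z with Re z ≤ 0, one has |1 + (√2 − 1) z| ≤ |1 − γ z|². Equivalently, the stability function R(z) = (1 + (√2 − 1)z)/(1 − γz)² of the implicit part of the IMEX-SSP2(2,2,2) scheme satisfies |R(z)| ≤ 1 on the closed left half-plane; in particular, for every real y, 1 + (3 − 2√2) y² ≤ (1 + (3/2 − √2) y²)². -/

import Mathlib

/-! Write `a = 1 − 2γ = √2 − 1`, `x = Re z` and `r = |z|²`. Expanding,
`|1 − γz|⁴ − |1 + az|² = (2γx)² + (γ²r)² − 2x(1 + 2γ³r) + (2γ² − a²) r`.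
For `γ = 1 − 1/√2` one has `2γ² = a²` (equivalently `γ² − 2γ + 1/2 = 0`), so every term is
nonnegative once `x ≤ 0`. -/

open Complex

theorem normSq_one_sub_mul_sq_sub_normSq_one_add_mul (γ : ℝ) (z : ℂ) :
    normSq (1 - (γ : ℂ) * z) ^ 2 - normSq (1 + ((1 - 2 * γ : ℝ) : ℂ) * z)
      = (2 * γ * z.re) ^ 2 + (γ ^ 2 * normSq z) ^ 2 - 2 * z.re * (1 + 2 * γ ^ 3 * normSq z)
        + (2 * γ ^ 2 - (1 - 2 * γ) ^ 2) * normSq z := by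
  simp only [normSq_apply, sub_re, sub_im, add_re, add_im, one_re, one_im, mul_re, mul_im,
    ofReal_re, ofReal_im]
  ring

theorem norm_one_add_mul_le_sq_norm_one_sub_mul {γ : ℝ} (hγ : (1 - 2 * γ) ^ 2 ≤ 2 * γ ^ 2)
    {z : ℂ} (hz : z.re ≤ 0) :
    ‖1 + ((1 - 2 * γ : ℝ) : ℂ) * z‖ ≤ ‖1 - (γ : ℂ) * z‖ ^ 2 := by
  have hγ_nonneg : 0 ≤ γ := by nlinarith
  have hnormSq : normSq (1 + ((1 - 2 * γ : ℝ) : ℂ) * z) ≤ normSq (1 - (γ : ℂ) * z) ^ 2 := by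
    have hexpand := normSq_one_sub_mul_sq_sub_normSq_one_add_mul γ z
    have hr := normSq_nonneg z
    linarith [sq_nonneg (2 * γ * z.re), sq_nonneg (γ ^ 2 * normSq z),
      mul_nonneg (by linarith : 0 ≤ -2 * z.re) (by positivity : 0 ≤ 1 + 2 * γ ^ 3 * normSq z),
      mul_nonneg (sub_nonneg.2 hγ) hr]
  rw [← pow_le_pow_iff_left₀ (norm_nonneg _) (by positivity) two_ne_zero, ← pow_mul,
    Complex.sq_norm, pow_mul, Complex.sq_norm]
  exact hnormSq

/-- A-stability of the implicit part of the IMEX-SSP2(2,2,2) scheme: with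
`γ = 1 − 1/√2`, for every `z` in the closed left half-plane one has
`|1 + (√2 − 1)z| ≤ |1 − γz|²`, equivalently `|R(z)| ≤ 1` for the stability function
`R(z) = (1 + (√2−1)z)/(1−γz)²`; in particular, for every real `y`,
`1 + (3 − 2√2)y² ≤ (1 + (3/2 − √2)y²)²`. -/
theorem imex_ssp2_A_stability (γ : ℝ) (hγ : γ = 1 - 1 / Real.sqrt 2) :
    (∀ z : ℂ, z.re ≤ 0 →
      ‖1 + ((Real.sqrt 2 - 1 : ℝ) : ℂ) * z‖
          ≤ ‖1 - (γ : ℂ) * z‖ ^ 2 ∧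
      ‖(1 + ((Real.sqrt 2 - 1 : ℝ) : ℂ) * z) / (1 - (γ : ℂ) * z) ^ 2‖ ≤ 1) ∧
    ∀ y : ℝ, 1 + (3 - 2 * Real.sqrt 2) * y ^ 2
        ≤ (1 + (3 / 2 - Real.sqrt 2) * y ^ 2) ^ 2 := by
  have hsqrt : Real.sqrt 2 ^ 2 = 2 := Real.sq_sqrt (by norm_num)
  have hγ' : γ = 1 - Real.sqrt 2 / 2 := by
    rw [hγ]; field_simp; linarith
  have hcoeff : Real.sqrt 2 - 1 = 1 - 2 * γ := by rw [hγ']; ring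
  have hroot : (1 - 2 * γ) ^ 2 = 2 * γ ^ 2 := by rw [hγ']; linear_combination hsqrt / 2
  refine ⟨fun z hz => ?_, fun y => ?_⟩
  · have h := norm_one_add_mul_le_sq_norm_one_sub_mul hroot.le hz
    rw [hcoeff, norm_div, norm_pow]
    exact ⟨h, div_le_one_of_le₀ h (by positivity)⟩
  · have hexpand : (1 + (3 / 2 - Real.sqrt 2) * y ^ 2) ^ 2
        = 1 + (3 - 2 * Real.sqrt 2) * y ^ 2 + ((3 / 2 - Real.sqrt 2) * y ^ 2) ^ 2 := by ring
    exact hexpand ▸ le_add_of_nonneg_right (sq_nonneg _)
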